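/- Let s ≥ 2 and let 1 ≤ k_1 ≤ k_2 ≤ ⋯ ≤ k_s < n and 1 < l_1 ≤ l_2 ≤ ⋯ ≤ l_s ≤ n satisfy k_j < l_j and l_j − k_j + 1 ≥ m for all j. Let f' = X_{1c_1}X_{2c_2}⋯X_{mc_m} be a diagonal monomial of Y_{k_1 l_1} and set c_0 = k_1 − 1. Suppose f and p are monomials in K[X] and, for each j, g_j is a diagonal monomial of Y_{k_j l_j}, such that f·f' = g_1 g_2 ⋯ g_s · p. Then at least one of the following holds: (i) f is divisible by some variable X_{ib} with 1 ≤ i ≤ m and c_{i−1} < b < c_i; or (ii) there exist diagonal monomials h_j of Y_{k_j l_j}, 1 ≤ j ≤ s, such that g_1 g_2 ⋯ g_s = h_1 h_2 ⋯ h_s and gcd(f', g_1 g_2 ⋯ g_s) divides h_1. -/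

import Mathlib

open MvPolynomial

/-- The exponent vector of the diagonal monomial with column sequence `c`
(rows `1,…,m`, row `i` contributing the variable `X (i, c i)`). -/
noncomputable def expVec (m : ℕ) (c : ℕ → ℕ) : (ℕ × ℕ) →₀ ℕ :=
  ∑ i ∈ Finset.Icc 1 m, Finsupp.single (i, c i) 1

/-- The diagonal monomial `X_{1 c₁} X_{2 c₂} ⋯ X_{m c_m}`. -/
noncomputable def diagMon (K : Type*) [Field K] (m : ℕ) (c : ℕ → ℕ) :
    MvPolynomial (ℕ × ℕ) K :=
  ∏ i ∈ Finset.Icc 1 m, MvPolynomial.X (i, c i)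

/-- `tauGt a b` : the monomial with exponent vector `a` is strictly larger than the one
with exponent vector `b` in the lexicographic monomial order τ induced by
`X 11 > X 12 > ⋯ > X 1n > X 21 > ⋯ > X mn` : at the most significant variable where
they differ (i.e. the lexicographically smallest index pair), `a` has the bigger exponent. -/
def tauGt (a b : (ℕ × ℕ) →₀ ℕ) : Prop :=
  ∃ p : ℕ × ℕ, b p < a p ∧
    ∀ q : ℕ × ℕ, (q.1 < p.1 ∨ (q.1 = p.1 ∧ q.2 < p.2)) → a q = b q

/-- `c` is the column sequence of a diagonal monomial of the submatrix `Y_{kl}`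
(columns `k` through `l`): strictly increasing on `1,…,m` with values in `[k,l]`. -/
def IsDiagSeq (m k l : ℕ) (c : ℕ → ℕ) : Prop :=
  (∀ i, 1 ≤ i → i < m → c i < c (i + 1)) ∧ k ≤ c 1 ∧ c m ≤ l

/-- The ideal `J_{kl}` of `K[X]` generated by all diagonal monomials of `Y_{kl}`. -/
noncomputable def Jkl (K : Type*) [Field K] (m k l : ℕ) : Ideal (MvPolynomial (ℕ × ℕ) K) :=
  Ideal.span {g | ∃ c, IsDiagSeq m k l c ∧ g = diagMon K m c}

/-- The exponent vector of the gcd of two monomials: pointwise minimum. -/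
noncomputable def gcdExp (A B : (ℕ × ℕ) →₀ ℕ) : (ℕ × ℕ) →₀ ℕ :=
  Finsupp.zipWith min (by simp) A B


/-!
Suppose no variable of `f` lies strictly between two consecutive columns `c_{i-1} < c_i` of `f'`.
A variable `X_{i, g_j(i)}` of `g₁ ⋯ g_s` with `g_j(i) ≠ c_i` divides `f · f'` but not `f'`, hence
divides `f`, so `g_j(i)` avoids the gap `(c_{i-1}, c_i)`; since `c₀ < k₁ ≤ g_j(1)` and `g_j` is
increasing, induction on `i` gives `c_i ≤ g_j(i)`.

Now sort each row: let `h_j(i)` be the `j`-th smallest of `g_1(i), …, g_s(i)`. This permutes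
the variables of each row, so `h₁ ⋯ h_s = g₁ ⋯ g_s`; sorting preserves strict inequalities
between rows, and since `k_j` and `l_j` increase with `j`, the bounds `k_j ≤ h_j(1)`,
`h_j(m) ≤ l_j` survive. Finally `h_1(i) = min_j g_j(i) ≥ c_i`, with equality as soon as
`X_{i c_i}` divides `g₁ ⋯ g_s`; that is `gcd(f', g₁ ⋯ g_s) ∣ h₁`.
-/

open Finset

section OrderStatistic

variable {α : Type*} [LinearOrder α] {n : ℕ}

/-- The `j`-th smallest value of `f`, counting from `j = 0`. -/
def orderStat (f : Fin n → α) (j : Fin n) : α :=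
  f (Tuple.sort f j)

variable {f f' : Fin n → α} {j : Fin n} {a : α}

lemma orderStat_le_iff : orderStat f j ≤ a ↔ j < #{i | f i ≤ a} := by
  rw [← card_equiv (Tuple.sort f) (s := {i | f (Tuple.sort f i) ≤ a}) (by simp)]
  exact (Tuple.lt_card_le_iff_apply_le_of_monotone (Tuple.monotone_sort f)).symm

lemma orderStat_lt_iff : orderStat f j < a ↔ j < #{i | f i < a} := by
  rw [← card_equiv (Tuple.sort f) (s := {i | f (Tuple.sort f i) < a}) (by simp)]
  exact (Tuple.lt_card_lt_iff_apply_lt_of_monotone (Tuple.monotone_sort f)).symm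

lemma orderStat_le_orderStat (h : ∀ i, f i ≤ f' i) (j : Fin n) :
    orderStat f j ≤ orderStat f' j :=
  orderStat_le_iff.mpr <| (orderStat_le_iff.mp le_rfl).trans_le <|
    card_le_card fun i ↦ by simpa using (h i).trans

lemma orderStat_lt_orderStat (h : ∀ i, f i < f' i) (j : Fin n) :
    orderStat f j < orderStat f' j :=
  orderStat_lt_iff.mpr <| (orderStat_le_iff.mp le_rfl).trans_le <|
    card_le_card fun i ↦ by simpa using (h i).trans_le

lemma orderStat_eq_of_monotone (hf : Monotone f) : orderStat f = f := by
  funext j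
  simp [orderStat, Tuple.sort_eq_refl_iff_monotone.mpr hf]

lemma orderStat_zero_eq_of_forall_le (hn : 0 < n) {i : Fin n} (hi : ∀ i', f i ≤ f i') :
    orderStat f ⟨0, hn⟩ = f i :=
  le_antisymm (orderStat_le_iff.mpr (card_pos.mpr ⟨i, by simp⟩)) (hi _)

lemma sum_orderStat {M : Type*} [AddCommMonoid M] (F : α → M) :
    ∑ j, F (orderStat f j) = ∑ i, F (f i) :=
  Equiv.sum_comp (Tuple.sort f) (F ∘ f)

end OrderStatistic

lemma sum_Icc_one_eq_sum_fin {M : Type*} [AddCommMonoid M] (s : ℕ) (F : ℕ → M) :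
    ∑ j ∈ Icc 1 s, F j = ∑ t : Fin s, F (t + 1) := by
  rw [Fin.sum_univ_eq_sum_range (fun t ↦ F (t + 1)), range_eq_Ico, sum_Ico_add' F 0 s 1]
  rfl

lemma monotoneOn_Icc_of_le_succ {k : ℕ → ℕ} {s : ℕ}
    (hk : ∀ j, 1 ≤ j → j < s → k j ≤ k (j + 1)) : MonotoneOn k (Set.Icc 1 s) :=
  monotoneOn_of_le_succ Set.ordConnected_Icc fun j _ hj hj' ↦ by
    simp only [Set.mem_Icc, Order.succ_eq_add_one] at hj hj' ⊢
    exact hk j hj.1 (by omega)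

section DiagonalMonomials

variable {m : ℕ}

lemma expVec_apply (d : ℕ → ℕ) (i b : ℕ) :
    expVec m d (i, b) = if 1 ≤ i ∧ i ≤ m ∧ d i = b then 1 else 0 := by
  simp only [expVec, Finsupp.finsetSum_apply, Finsupp.single_apply, Prod.mk.injEq, ite_and,
    sum_ite_eq', mem_Icc]

lemma diagMon_eq_monomial (K : Type*) [Field K] (d : ℕ → ℕ) :
    diagMon K m d = monomial (expVec m d) 1 := by
  rw [diagMon, expVec, monomial_sum_one]
  rfl

lemma prod_diagMon_eq_monomial (K : Type*) [Field K] (S : Finset ℕ) (g : ℕ → ℕ → ℕ) :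
    ∏ j ∈ S, diagMon K m (g j) = monomial (∑ j ∈ S, expVec m (g j)) 1 := by
  simp only [diagMon_eq_monomial, monomial_sum_one]

lemma le_of_forall_notMem_Ioo {c d : ℕ → ℕ} (hd : ∀ i, 1 ≤ i → i < m → d i < d (i + 1))
    (h0 : c 0 < d 1) (hgap : ∀ i, 1 ≤ i → i ≤ m → d i ∉ Set.Ioo (c (i - 1)) (c i)) :
    ∀ i, 1 ≤ i → i ≤ m → c i ≤ d i := by
  intro i hi him
  induction i with
  | zero => omega
  | succ i ih =>
    have hprev : c i < d (i + 1) := by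
      rcases Nat.eq_zero_or_pos i with rfl | hi'
      · exact h0
      · exact (ih hi' (by omega)).trans_lt (hd i hi' (by omega))
    exact not_lt.mp fun hlt ↦ hgap (i + 1) hi him ⟨hprev, hlt⟩

lemma apply_ne_zero_of_add_expVec_eq {S : Finset ℕ} {c : ℕ → ℕ} {g : ℕ → ℕ → ℕ}
    {α β : (ℕ × ℕ) →₀ ℕ} (hexp : α + expVec m c = ∑ j ∈ S, expVec m (g j) + β)
    {j i : ℕ} (hj : j ∈ S) (hi1 : 1 ≤ i) (him : i ≤ m) (hne : c i ≠ g j i) :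
    α (i, g j i) ≠ 0 := by
  have hone : 1 ≤ (∑ j ∈ S, expVec m (g j) + β) (i, g j i) :=
    calc 1 = expVec m (g j) (i, g j i) := by simp [expVec_apply, hi1, him]
      _ ≤ (∑ j ∈ S, expVec m (g j)) (i, g j i) := by
        rw [Finsupp.finsetSum_apply]
        exact single_le_sum (f := fun j' ↦ expVec m (g j') (i, g j i))
          (fun _ _ ↦ Nat.zero_le _) hj
      _ ≤ _ := Nat.le_add_right _ _
  have hc : expVec m c (i, g j i) = 0 := by simp [expVec_apply, hne]
  rw [← hexp, Finsupp.add_apply, hc] at hone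
  omega

lemma isDiagSeq_orderStat {n : ℕ} {k l : Fin n → ℕ} (hk : Monotone k) (hl : Monotone l)
    {g : Fin n → ℕ → ℕ} (hg : ∀ t, IsDiagSeq m (k t) (l t) (g t)) (j : Fin n) :
    IsDiagSeq m (k j) (l j) (fun i ↦ orderStat (fun t ↦ g t i) j) := by
  refine ⟨fun i hi him ↦ orderStat_lt_orderStat (fun t ↦ (hg t).1 i hi him) j, ?_, ?_⟩
  · calc k j = orderStat k j := by rw [orderStat_eq_of_monotone hk]
      _ ≤ _ := orderStat_le_orderStat (fun t ↦ (hg t).2.1) j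
  · calc _ ≤ orderStat l j := orderStat_le_orderStat (fun t ↦ (hg t).2.2) j
      _ = l j := by rw [orderStat_eq_of_monotone hl]

lemma sum_expVec_orderStat {n : ℕ} (g : Fin n → ℕ → ℕ) :
    ∑ j, expVec m (fun i ↦ orderStat (fun t ↦ g t i) j) = ∑ t, expVec m (g t) := by
  simp only [expVec]
  rw [sum_comm, sum_comm (s := univ)]
  exact sum_congr rfl fun i _ ↦ sum_orderStat (fun b ↦ Finsupp.single (i, b) 1)

lemma gcdExp_le_expVec_orderStat_zero {n : ℕ} (hn : 0 < n) {c : ℕ → ℕ} {g : Fin n → ℕ → ℕ}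
    (hcg : ∀ t i, 1 ≤ i → i ≤ m → c i ≤ g t i) :
    gcdExp (expVec m c) (∑ t, expVec m (g t)) ≤
      expVec m (fun i ↦ orderStat (fun t ↦ g t i) ⟨0, hn⟩) := by
  rintro ⟨i, b⟩
  change min (expVec m c (i, b)) ((∑ t, expVec m (g t)) (i, b)) ≤ _
  simp only [Finsupp.finsetSum_apply, expVec_apply]
  by_cases hci : 1 ≤ i ∧ i ≤ m ∧ c i = b
  · by_cases hgi : ∃ t, g t i = b
    · obtain ⟨t, ht⟩ := hgi
      have hmin : orderStat (fun t ↦ g t i) ⟨0, hn⟩ = b :=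
        ht ▸ orderStat_zero_eq_of_forall_le hn fun t' ↦ by
          rw [ht, ← hci.2.2]; exact hcg t' i hci.1 hci.2.1
      simp [hci, hmin]
    · simp [forall_not_of_not_exists hgi]
  · simp [hci]

end DiagonalMonomials

/-- For `1 ≤ j ≤ s`, `sortFamily s g j i` is the `j`-th smallest of `g 1 i, …, g s i`. -/
noncomputable def sortFamily (s : ℕ) (g : ℕ → ℕ → ℕ) (j i : ℕ) : ℕ :=
  if hj : j - 1 < s then orderStat (fun t : Fin s ↦ g (t + 1) i) ⟨j - 1, hj⟩ else 0

section SortFamily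

variable {m s : ℕ} {g : ℕ → ℕ → ℕ}

lemma sortFamily_succ (t : Fin s) :
    sortFamily s g (t + 1) = fun i ↦ orderStat (fun u : Fin s ↦ g (u + 1) i) t := by
  funext i
  simp [sortFamily]

lemma exists_fin_succ_eq {j : ℕ} (hj1 : 1 ≤ j) (hjs : j ≤ s) : ∃ t : Fin s, (t : ℕ) + 1 = j :=
  ⟨⟨j - 1, by omega⟩, by simp only; omega⟩

lemma isDiagSeq_sortFamily {k l : ℕ → ℕ} (hk : MonotoneOn k (Set.Icc 1 s))
    (hl : MonotoneOn l (Set.Icc 1 s)) (hg : ∀ j, 1 ≤ j → j ≤ s → IsDiagSeq m (k j) (l j) (g j))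
    (j : ℕ) (hj1 : 1 ≤ j) (hjs : j ≤ s) : IsDiagSeq m (k j) (l j) (sortFamily s g j) := by
  obtain ⟨t, rfl⟩ := exists_fin_succ_eq hj1 hjs
  have hmono {k : ℕ → ℕ} (hk : MonotoneOn k (Set.Icc 1 s)) :
      Monotone fun u : Fin s ↦ k (u + 1) := fun u v huv ↦
    hk ⟨by omega, u.2⟩ ⟨by omega, v.2⟩ (by simpa using huv)
  rw [sortFamily_succ]
  exact isDiagSeq_orderStat (hmono hk) (hmono hl) (fun u ↦ hg _ (by omega) (by omega)) t

lemma sum_expVec_sortFamily :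
    ∑ j ∈ Icc 1 s, expVec m (sortFamily s g j) = ∑ j ∈ Icc 1 s, expVec m (g j) := by
  simp only [sum_Icc_one_eq_sum_fin, sortFamily_succ]
  exact sum_expVec_orderStat fun t ↦ g (t + 1)

lemma gcdExp_le_expVec_sortFamily_one (hs : 0 < s) {c : ℕ → ℕ}
    (hcg : ∀ j, 1 ≤ j → j ≤ s → ∀ i, 1 ≤ i → i ≤ m → c i ≤ g j i) :
    gcdExp (expVec m c) (∑ j ∈ Icc 1 s, expVec m (g j)) ≤ expVec m (sortFamily s g 1) := by
  have := gcdExp_le_expVec_orderStat_zero hs (m := m) (c := c) (g := fun t ↦ g (t + 1))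
    fun t i ↦ hcg _ (by omega) (by omega) i
  rwa [sum_Icc_one_eq_sum_fin, show sortFamily s g 1 = _ from sortFamily_succ ⟨0, hs⟩]

end SortFamily

theorem stmt_8_general (K : Type*) [Field K] (m s : ℕ) (hs : 2 ≤ s)
    (k l : ℕ → ℕ)
    (hk1 : 1 ≤ k 1) (hkmono : ∀ j, 1 ≤ j → j < s → k j ≤ k (j + 1))
    (hlmono : ∀ j, 1 ≤ j → j < s → l j ≤ l (j + 1))
    (c : ℕ → ℕ) (hc0 : c 0 = k 1 - 1)
    (g : ℕ → ℕ → ℕ) (hg : ∀ j, 1 ≤ j → j ≤ s → IsDiagSeq m (k j) (l j) (g j))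
    (α β : (ℕ × ℕ) →₀ ℕ)
    (heq : (MvPolynomial.monomial α (1 : K)) * diagMon K m c =
      (∏ j ∈ Finset.Icc 1 s, diagMon K m (g j)) * MvPolynomial.monomial β 1) :
    (∃ i b : ℕ, 1 ≤ i ∧ i ≤ m ∧ c (i - 1) < b ∧ b < c i ∧
        MvPolynomial.X (i, b) ∣ MvPolynomial.monomial α (1 : K)) ∨
    (∃ h : ℕ → ℕ → ℕ, (∀ j, 1 ≤ j → j ≤ s → IsDiagSeq m (k j) (l j) (h j)) ∧
        (∏ j ∈ Finset.Icc 1 s, diagMon K m (g j)) = (∏ j ∈ Finset.Icc 1 s, diagMon K m (h j)) ∧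
        (MvPolynomial.monomial
            (gcdExp (expVec m c) (∑ j ∈ Finset.Icc 1 s, expVec m (g j))) (1 : K)) ∣
          diagMon K m (h 1)) := by
  have hexp : α + expVec m c = ∑ j ∈ Icc 1 s, expVec m (g j) + β := by
    rwa [diagMon_eq_monomial, prod_diagMon_eq_monomial, monomial_mul, monomial_mul, one_mul,
      monomial_left_inj one_ne_zero] at heq
  refine or_iff_not_imp_left.mpr fun hnot ↦ ?_
  have hcg : ∀ j, 1 ≤ j → j ≤ s → ∀ i, 1 ≤ i → i ≤ m → c i ≤ g j i := by
    intro j hj1 hjs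
    have hkj : k 1 ≤ k j := monotoneOn_Icc_of_le_succ hkmono ⟨le_rfl, by omega⟩ ⟨hj1, hjs⟩ hj1
    exact le_of_forall_notMem_Ioo (hg j hj1 hjs).1 (by have := (hg j hj1 hjs).2.1; omega)
      fun i hi1 him hgap ↦ hnot ⟨i, g j i, hi1, him, hgap.1, hgap.2, X_dvd_monomial.mpr <|
        Or.inr <| apply_ne_zero_of_add_expVec_eq hexp (mem_Icc.mpr ⟨hj1, hjs⟩) hi1 him hgap.2.ne'⟩
  refine ⟨sortFamily s g, isDiagSeq_sortFamily (monotoneOn_Icc_of_le_succ hkmono)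
    (monotoneOn_Icc_of_le_succ hlmono) hg, ?_, ?_⟩
  · rw [prod_diagMon_eq_monomial, prod_diagMon_eq_monomial, sum_expVec_sortFamily]
  · rw [diagMon_eq_monomial, monomial_one_dvd_monomial_one]
    exact gcdExp_le_expVec_sortFamily_one (by omega) hcg

/-- Let `s ≥ 2`, `1 ≤ k₁ ≤ ⋯ ≤ k_s < n`, `1 < l₁ ≤ ⋯ ≤ l_s ≤ n` with
`k_j < l_j`, `l_j - k_j + 1 ≥ m`.  Let `f' = X_{1c₁}⋯X_{mc_m}` be a diagonal monomial
of `Y_{k₁l₁}`, `c₀ = k₁ - 1`.  Suppose `f = monomial α 1` and `p = monomial β 1` are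
monomials with `f·f' = g₁⋯g_s·p`, where `g_j` is a diagonal monomial of `Y_{k_j l_j}`.
Then either (i) some variable `X_{ib}` with `1 ≤ i ≤ m`, `c_{i-1} < b < c_i` divides
`f`, or (ii) there are diagonal monomials `h_j` of `Y_{k_j l_j}` with
`g₁⋯g_s = h₁⋯h_s` and `gcd(f', g₁⋯g_s) ∣ h₁`. -/
theorem stmt_8 (K : Type*) [Field K] (m n s : ℕ) (hm : 1 ≤ m) (hmn : m ≤ n) (hs : 2 ≤ s)
    (k l : ℕ → ℕ)
    (hk1 : 1 ≤ k 1) (hkmono : ∀ j, 1 ≤ j → j < s → k j ≤ k (j + 1)) (hks : k s < n)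
    (hl1 : 1 < l 1) (hlmono : ∀ j, 1 ≤ j → j < s → l j ≤ l (j + 1)) (hls : l s ≤ n)
    (hkl : ∀ j, 1 ≤ j → j ≤ s → k j < l j)
    (hlen : ∀ j, 1 ≤ j → j ≤ s → m ≤ l j - k j + 1)
    (c : ℕ → ℕ) (hc : IsDiagSeq m (k 1) (l 1) c) (hc0 : c 0 = k 1 - 1)
    (g : ℕ → ℕ → ℕ) (hg : ∀ j, 1 ≤ j → j ≤ s → IsDiagSeq m (k j) (l j) (g j))
    (α β : (ℕ × ℕ) →₀ ℕ)
    (heq : (MvPolynomial.monomial α (1 : K)) * diagMon K m c =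
      (∏ j ∈ Finset.Icc 1 s, diagMon K m (g j)) * MvPolynomial.monomial β 1) :
    (∃ i b : ℕ, 1 ≤ i ∧ i ≤ m ∧ c (i - 1) < b ∧ b < c i ∧
        MvPolynomial.X (i, b) ∣ MvPolynomial.monomial α (1 : K)) ∨
    (∃ h : ℕ → ℕ → ℕ, (∀ j, 1 ≤ j → j ≤ s → IsDiagSeq m (k j) (l j) (h j)) ∧
        (∏ j ∈ Finset.Icc 1 s, diagMon K m (g j)) = (∏ j ∈ Finset.Icc 1 s, diagMon K m (h j)) ∧
        (MvPolynomial.monomial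
            (gcdExp (expVec m c) (∑ j ∈ Finset.Icc 1 s, expVec m (g j))) (1 : K)) ∣
          diagMon K m (h 1)) :=
  stmt_8_general K m s hs k l hk1 hkmono hlmono c hc0 g hg α β heq
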